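/- Invariant verification: let 𝒫𝒮 be a parallel event system, Init ⊆ S, I ⊆ S, and G ⊆ S × S (in particular, G may be taken as the union of the guarantee conditions of all events of 𝒫𝒮). If (i) ⊢ 𝒫𝒮 sat ⟨Init, ∅, G, UNIV⟩ is derivable in the rely-guarantee proof system, (ii) Init ⊆ I, and (iii) stable(I, G), then I is an invariant of 𝒫𝒮 with respect to Init: for every s ∈ Init, every event context x, and every computation ϖ ∈ Ψ(𝒫𝒮, s, x) having no environment transitions, every state occurring in ϖ lies in I. -/

import Mathlib

set_option autoImplicit false

namespace PiCore

/-! ## Syntax of PiCore -/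

/-- PiCore programs; `term` is the terminated program `⊥`. -/
inductive Prog (S : Type) : Type where
  | term : Prog S
  | basic : (S → S) → Prog S
  | seq : Prog S → Prog S → Prog S
  | cond : Set S → Prog S → Prog S → Prog S
  | while' : Set S → Prog S → Prog S
  | await : Set S → Prog S → Prog S
  | nondt : Set (S × S) → Prog S

/-! ## Small-step semantics of programs -/

mutual
/-- Small-step program semantics `(P, s) -c→ (P', s')`. -/
inductive PStep {S : Type} : Prog S × S → Prog S × S → Prop where
  | basic (f : S → S) (s : S) : PStep (.basic f, s) (.term, f s)
  | seq1 {P₁ : Prog S} {s s' : S} (P₂ : Prog S) :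
      PStep (P₁, s) (.term, s') → PStep (.seq P₁ P₂, s) (P₂, s')
  | seq2 {P₁ P₁' : Prog S} {s s' : S} (P₂ : Prog S) :
      PStep (P₁, s) (P₁', s') → P₁' ≠ .term → PStep (.seq P₁ P₂, s) (.seq P₁' P₂, s')
  | condT {b : Set S} {s : S} (P₁ P₂ : Prog S) : s ∈ b → PStep (.cond b P₁ P₂, s) (P₁, s)
  | condF {b : Set S} {s : S} (P₁ P₂ : Prog S) : s ∉ b → PStep (.cond b P₁ P₂, s) (P₂, s)
  | whileT {b : Set S} {s : S} (P : Prog S) : s ∈ b →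
      PStep (.while' b P, s) (.seq P (.while' b P), s)
  | whileF {b : Set S} {s : S} (P : Prog S) : s ∉ b → PStep (.while' b P, s) (.term, s)
  | await {b : Set S} {s s' : S} {P : Prog S} : s ∈ b →
      PStepStar (P, s) (.term, s') → PStep (.await b P, s) (.term, s')
  | nondt {r : Set (S × S)} {s s' : S} : (s, s') ∈ r → PStep (.nondt r, s) (.term, s')

/-- Reflexive transitive closure of `PStep`. -/
inductive PStepStar {S : Type} : Prog S × S → Prog S × S → Prop where
  | refl (c : Prog S × S) : PStepStar c c
  | step {c c' c'' : Prog S × S} : PStep c c' → PStepStar c' c'' → PStepStar c c''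
end

/-! ## Events, event systems, parallel event systems -/

/-- A basic event: a label, a guard and a body. -/
structure EvtSpec (L S : Type) : Type where
  label : L
  guard : Set S
  body : Prog S

/-- Events: basic (non-triggered) events and anonymous (triggered) events. -/
inductive Event (L S : Type) : Type where
  | basic : EvtSpec L S → Event L S
  | anony : Prog S → Event L S

/-- Event contexts. -/
abbrev EvtCtx (L S K : Type) := K → Event L S

/-- The action component of a transition label: a program action `c`
or the occurrence of an event. -/
inductive Act (L S : Type) : Type where
  | cmd : Act L S
  | evt : Event L S → Act L S

/-- Transition labels `t@κ`. -/
abbrev Lbl (L S K : Type) := Act L S × K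

/-- Configurations at the level of events. -/
abbrev EConf (L S K : Type) := Event L S × S × EvtCtx L S K

/-- Labelled transitions of events. -/
inductive EStep {L S K : Type} [DecidableEq K] :
    EConf L S K → Lbl L S K → EConf L S K → Prop where
  | anony {P P' : Prog S} {s s' : S} (x : EvtCtx L S K) (κ : K) :
      PStep (P, s) (P', s') → EStep (.anony P, s, x) (.cmd, κ) (.anony P', s', x)
  | basic (α : EvtSpec L S) {s : S} (x : EvtCtx L S K) (κ : K) : s ∈ α.guard →
      EStep (.basic α, s, x) (.evt (.basic α), κ)
        (.anony α.body, s, Function.update x κ (.basic α))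

/-- Event systems: a finite event set `{ℰ₀, …, ℰₙ}` or a sequence `EvtSeq ℰ 𝒮`. -/
inductive EvtSys (L S : Type) : Type where
  | set : (n : ℕ) → (Fin (n + 1) → Event L S) → EvtSys L S
  | seq : Event L S → EvtSys L S → EvtSys L S

/-- Configurations at the level of event systems. -/
abbrev ESConf (L S K : Type) := EvtSys L S × S × EvtCtx L S K

/-- Labelled transitions of event systems. -/
inductive ESStep {L S K : Type} [DecidableEq K] :
    ESConf L S K → Lbl L S K → ESConf L S K → Prop where
  | set {n : ℕ} {es : Fin (n + 1) → Event L S} (i : Fin (n + 1))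
      {s s' : S} {x x' : EvtCtx L S K} {e' : Event L S} {κ : K} :
      EStep (es i, s, x) (.evt (es i), κ) (e', s', x') →
      ESStep (.set n es, s, x) (.evt (es i), κ) (.seq e' (.set n es), s', x')
  | seq1 {e e' : Event L S} (𝒮 : EvtSys L S) {s s' : S} {x x' : EvtCtx L S K}
      {l : Lbl L S K} :
      EStep (e, s, x) l (e', s', x') → e' ≠ .anony .term →
      ESStep (.seq e 𝒮, s, x) l (.seq e' 𝒮, s', x')
  | seq2 {e : Event L S} (𝒮 : EvtSys L S) {s s' : S} {x x' : EvtCtx L S K}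
      {l : Lbl L S K} :
      EStep (e, s, x) l (.anony .term, s', x') →
      ESStep (.seq e 𝒮, s, x) l (𝒮, s', x')

/-- Parallel event systems. -/
abbrev PES (L S K : Type) := K → EvtSys L S

/-- Configurations at the level of parallel event systems. -/
abbrev PConf (L S K : Type) := PES L S K × S × EvtCtx L S K

/-- Labelled transitions of parallel event systems. -/
inductive PESStep {L S K : Type} [DecidableEq K] :
    PConf L S K → Lbl L S K → PConf L S K → Prop where
  | par {ps : PES L S K} {κ : K} {t : Act L S} {s s' : S} {x x' : EvtCtx L S K}
      {es' : EvtSys L S} :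
      ESStep (ps κ, s, x) (t, κ) (es', s', x') →
      PESStep (ps, s, x) (t, κ) (Function.update ps κ es', s', x')

/-! ## Computations -/

section Computation

variable {σ S X : Type}

/-- An environment transition between two configurations:
the specification component is unchanged. -/
def EnvTr (c c' : σ × S × X) : Prop := c.1 = c'.1

/-- Computations: nonempty lists of configurations in which every consecutive pair
is an environment transition or an action transition of the semantics. -/
inductive Comp (step : σ × S × X → σ × S × X → Prop) : List (σ × S × X) → Prop where
  | one (c : σ × S × X) : Comp step [c]
  | env {sp : σ} {s₁ s₂ : S} {x₁ x₂ : X} {cs : List (σ × S × X)} :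
      Comp step ((sp, s₁, x₁) :: cs) → Comp step ((sp, s₂, x₂) :: (sp, s₁, x₁) :: cs)
  | act {c c' : σ × S × X} {cs : List (σ × S × X)} :
      step c c' → Comp step (c' :: cs) → Comp step (c :: c' :: cs)

/-- `Ψ(♯, s, x)`: the computations starting in the configuration `(♯, s, x)`. -/
def cpts (step : σ × S × X → σ × S × X → Prop) (sp : σ) (s : S) (x : X) :
    Set (List (σ × S × X)) :=
  {ϖ | Comp step ϖ ∧ ϖ.head? = some (sp, s, x)}

/-- The assumption `A(pre, R)`. -/
def Assum (pre : Set S) (R : Set (S × S)) : Set (List (σ × S × X)) :=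
  {ϖ | (∀ c, ϖ.head? = some c → c.2.1 ∈ pre) ∧
    ∀ i c c', ϖ[i]? = some c → ϖ[i + 1]? = some c' → EnvTr c c' →
      (c.2.1, c'.2.1) ∈ R}

/-- The commitment `C(G, pst)` (`fin` tells when a specification is terminated). -/
def Commit (step : σ × S × X → σ × S × X → Prop) (fin : σ → Prop)
    (G : Set (S × S)) (pst : Set S) : Set (List (σ × S × X)) :=
  {ϖ | (∀ i c c', ϖ[i]? = some c → ϖ[i + 1]? = some c' → step c c' →
      (c.2.1, c'.2.1) ∈ G) ∧
    ∀ c, ϖ.getLast? = some c → fin c.1 → c.2.1 ∈ pst}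

end Computation

/-! ## Validity of rely-guarantee specifications -/

section Validity

variable {L S K : Type}

/-- Program action transitions lifted to configurations with a trivial event context. -/
def pstepL {S : Type} (c c' : Prog S × S × Unit) : Prop :=
  PStep (c.1, c.2.1) (c'.1, c'.2.1)

/-- Action transitions of events (any label). -/
def estepAny [DecidableEq K] (c c' : EConf L S K) : Prop := ∃ l, EStep c l c'

/-- Action transitions of event systems (any label). -/
def esstepAny [DecidableEq K] (c c' : ESConf L S K) : Prop := ∃ l, ESStep c l c'

/-- Action transitions of parallel event systems (any label). -/
def pesstepAny [DecidableEq K] (c c' : PConf L S K) : Prop := ∃ l, PESStep c l c'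

/-- A terminated program. -/
def progFin : Prog S → Prop := fun P => P = .term

/-- A terminated event. -/
def evtFin : Event L S → Prop := fun e => e = .anony .term

/-- Event systems have no terminated form. -/
def esysFin : EvtSys L S → Prop := fun _ => False

/-- Parallel event systems have no terminated form. -/
def pesFin : PES L S K → Prop := fun _ => False

/-- Validity `⊨ P sat ⟨pre, R, G, pst⟩` for programs. -/
def progValid (P : Prog S) (pre : Set S) (R G : Set (S × S)) (pst : Set S) : Prop :=
  ∀ s : S, cpts pstepL P s () ∩ Assum pre R ⊆ Commit pstepL progFin G pst

/-- Validity `⊨ ℰ sat ⟨pre, R, G, pst⟩` for events. -/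
def evtValid [DecidableEq K] (e : Event L S) (pre : Set S) (R G : Set (S × S))
    (pst : Set S) : Prop :=
  ∀ (s : S) (x : EvtCtx L S K),
    cpts estepAny e s x ∩ Assum pre R ⊆ Commit estepAny evtFin G pst

/-- Validity `⊨ 𝒮 sat ⟨pre, R, G, pst⟩` for event systems. -/
def esysValid [DecidableEq K] (es : EvtSys L S) (pre : Set S) (R G : Set (S × S))
    (pst : Set S) : Prop :=
  ∀ (s : S) (x : EvtCtx L S K),
    cpts esstepAny es s x ∩ Assum pre R ⊆ Commit esstepAny esysFin G pst

/-- Validity `⊨ 𝒫𝒮 sat ⟨pre, R, G, pst⟩` for parallel event systems. -/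
def pesValid [DecidableEq K] (ps : PES L S K) (pre : Set S) (R G : Set (S × S))
    (pst : Set S) : Prop :=
  ∀ (s : S) (x : EvtCtx L S K),
    cpts pesstepAny ps s x ∩ Assum pre R ⊆ Commit pesstepAny pesFin G pst

end Validity

/-! ## The rely-guarantee proof system -/

/-- Specifications: programs, events, event systems, or parallel event systems. -/
inductive Spec (L S K : Type) : Type where
  | prog : Prog S → Spec L S K
  | evt : Event L S → Spec L S K
  | esys : EvtSys L S → Spec L S K
  | pes : PES L S K → Spec L S K

/-- A specification that is not a parallel event system. -/
def Spec.noPar {L S K : Type} : Spec L S K → Prop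
  | .pes _ => False
  | _ => True

/-- Uniform validity `⊨ ♯ sat ⟨pre, R, G, pst⟩`. -/
def RGValid {L S K : Type} [DecidableEq K] :
    Spec L S K → Set S → Set (S × S) → Set (S × S) → Set S → Prop
  | .prog P, pre, R, G, pst => progValid P pre R G pst
  | .evt e, pre, R, G, pst => evtValid (K := K) e pre R G pst
  | .esys es, pre, R, G, pst => esysValid (K := K) es pre R G pst
  | .pes ps, pre, R, G, pst => pesValid ps pre R G pst

/-- `stable f g`. -/
def stable {α : Type} (f : Set α) (g : Set (α × α)) : Prop :=
  ∀ x y, x ∈ f → (x, y) ∈ g → y ∈ f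

/-- The identity relation on a state space. -/
def idRel {S : Type} : Set (S × S) := {p | p.1 = p.2}

/-- The rely-guarantee proof system `⊢ ♯ sat ⟨pre, R, G, pst⟩`. -/
inductive RGDeriv {L S K : Type} [DecidableEq K] :
    Spec L S K → Set S → Set (S × S) → Set (S × S) → Set S → Prop where
  | basic {f : S → S} {pre pst : Set S} {R G : Set (S × S)} :
      pre ⊆ {s | f s ∈ pst} →
      {p : S × S | p.1 ∈ pre ∧ p.2 = f p.1} ⊆ G →
      stable pre R → stable pst R →
      RGDeriv (.prog (.basic f)) pre R G pst
  | seq {P Q : Prog S} {pre m pst : Set S} {R G : Set (S × S)} :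
      RGDeriv (.prog P) pre R G m → RGDeriv (.prog Q) m R G pst →
      RGDeriv (.prog (.seq P Q)) pre R G pst
  | cond {b : Set S} {P₁ P₂ : Prog S} {pre pst : Set S} {R G : Set (S × S)} :
      RGDeriv (.prog P₁) (pre ∩ b) R G pst →
      RGDeriv (.prog P₂) (pre ∩ bᶜ) R G pst →
      stable pre R → idRel ⊆ G →
      RGDeriv (.prog (.cond b P₁ P₂)) pre R G pst
  | whileR {b : Set S} {P : Prog S} {pre pst : Set S} {R G : Set (S × S)} :
      RGDeriv (.prog P) (pre ∩ b) R G pre →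
      pre ∩ bᶜ ⊆ pst →
      stable pre R → stable pst R → idRel ⊆ G →
      RGDeriv (.prog (.while' b P)) pre R G pst
  | awaitR {b : Set S} {P : Prog S} {pre pst : Set S} {R G : Set (S × S)} :
      (∀ V : S, RGDeriv (.prog P) (pre ∩ b ∩ {V}) idRel Set.univ
        ({s | (V, s) ∈ G} ∩ pst)) →
      stable pre R → stable pst R →
      RGDeriv (.prog (.await b P)) pre R G pst
  | nondt {r : Set (S × S)} {pre pst : Set S} {R G : Set (S × S)} :
      pre ⊆ {s | (∀ s', (s, s') ∈ r → s' ∈ pst) ∧ ∃ s', (s, s') ∈ r} →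
      {p : S × S | p.1 ∈ pre ∧ p ∈ r} ⊆ G →
      stable pre R → stable pst R →
      RGDeriv (.prog (.nondt r)) pre R G pst
  | conseq {sp : Spec L S K} {pre pre' pst pst' : Set S} {R R' G G' : Set (S × S)} :
      sp.noPar →
      pre ⊆ pre' → R ⊆ R' → G' ⊆ G → pst' ⊆ pst →
      RGDeriv sp pre' R' G' pst' →
      RGDeriv sp pre R G pst
  | unPre {P : Prog S} {pre pre' pst : Set S} {R G : Set (S × S)} :
      RGDeriv (.prog P) pre R G pst → RGDeriv (.prog P) pre' R G pst →
      RGDeriv (.prog P) (pre ∪ pre') R G pst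
  | intPost {P : Prog S} {pre pst pst' : Set S} {R G : Set (S × S)} :
      RGDeriv (.prog P) pre R G pst → RGDeriv (.prog P) pre R G pst' →
      RGDeriv (.prog P) pre R G (pst ∩ pst')
  | univPre {P : Prog S} {pre pst : Set S} {R G : Set (S × S)} :
      (∀ v ∈ pre, RGDeriv (.prog P) {v} R G pst) →
      RGDeriv (.prog P) pre R G pst
  | emptyPre {P : Prog S} {pst : Set S} {R G : Set (S × S)} :
      RGDeriv (.prog P) ∅ R G pst
  | inner {P : Prog S} {pre pst : Set S} {R G : Set (S × S)} :
      RGDeriv (.prog P) pre R G pst →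
      RGDeriv (.evt (.anony P)) pre R G pst
  | basicEvt {α : EvtSpec L S} {pre pst : Set S} {R G : Set (S × S)} :
      RGDeriv (.prog α.body) (pre ∩ α.guard) R G pst →
      stable pre R → idRel ⊆ G →
      RGDeriv (.evt (.basic α)) pre R G pst
  | evtSeq {e : Event L S} {𝒮 : EvtSys L S} {pre m pst : Set S} {R G : Set (S × S)} :
      RGDeriv (.evt e) pre R G m → RGDeriv (.esys 𝒮) m R G pst →
      RGDeriv (.esys (.seq e 𝒮)) pre R G pst
  | evtSet {n : ℕ} {es : Fin (n + 1) → Event L S} {pre pst : Set S}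
      {R G : Set (S × S)} {pres psts : Fin (n + 1) → Set S}
      {Rs Gs : Fin (n + 1) → Set (S × S)} :
      (∀ i, RGDeriv (.evt (es i)) (pres i) (Rs i) (Gs i) (psts i)) →
      (∀ i j, psts i ⊆ pres j) →
      (∀ i, pre ⊆ pres i) → (∀ i, psts i ⊆ pst) →
      (∀ i, R ⊆ Rs i) → (∀ i, Gs i ⊆ G) →
      stable pre R → idRel ⊆ G →
      RGDeriv (.esys (.set n es)) pre R G pst
  | par {ps : PES L S K} {pre pst : Set S} {R G : Set (S × S)}
      {pres psts : K → Set S} {Rs Gs : K → Set (S × S)} :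
      (∀ κ, RGDeriv (.esys (ps κ)) (pres κ) (Rs κ) (Gs κ) (psts κ)) →
      (∀ κ, pre ⊆ pres κ) → (∀ κ, psts κ ⊆ pst) →
      (∀ κ, Gs κ ⊆ G) → (∀ κ, R ⊆ Rs κ) →
      (∀ κ κ', κ ≠ κ' → Gs κ ⊆ Rs κ') →
      RGDeriv (.pes ps) pre R G pst


/-! ## Serialization and compositionality machinery -/

/-- The set of events occurring syntactically in an event system. -/
def EvtSys.evts {L S : Type} : EvtSys L S → Set (Event L S)
  | .set _ es => Set.range es
  | .seq e 𝒮 => insert e 𝒮.evts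

/-- Similarity (simulation) of two computations, possibly over different
specification types: same length, and at each position the states and event
contexts coincide and the steps are the same labelled action transitions
(resp. environment transitions). -/
def Similar {σ₁ σ₂ S X Λ : Type}
    (st₁ : σ₁ × S × X → Λ → σ₁ × S × X → Prop)
    (st₂ : σ₂ × S × X → Λ → σ₂ × S × X → Prop)
    (w₁ : List (σ₁ × S × X)) (w₂ : List (σ₂ × S × X)) : Prop :=
  w₁.length = w₂.length ∧
  ∀ i c₁ c₁' c₂ c₂', w₁[i]? = some c₁ → w₁[i + 1]? = some c₁' →
    w₂[i]? = some c₂ → w₂[i + 1]? = some c₂' →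
    c₁.2.1 = c₂.2.1 ∧ c₁.2.2 = c₂.2.2 ∧
    (∀ δ, st₁ c₁ δ c₁' ↔ st₂ c₂ δ c₂') ∧
    (EnvTr c₁ c₁' ↔ EnvTr c₂ c₂')

/-- The computations of an event (from an arbitrary initial state and
event context). -/
def cptsOfEvt {L S K : Type} [DecidableEq K] (e : Event L S) :
    Set (List (EConf L S K)) :=
  {w | Comp estepAny w ∧ ∃ s x, w.head? = some (e, s, x)}

/-- A computation `w` of a parallel event system and a family `cf` of
computations of event systems conjoin, `w ∝ cf` (Definition 2). -/
def Conjoin {L S K : Type} [DecidableEq K] (w : List (PConf L S K))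
    (cf : K → List (ESConf L S K)) : Prop :=
  (∀ κ, (cf κ).length = w.length) ∧
  (∀ (κ : K) (j : ℕ) c c', w[j]? = some c → (cf κ)[j]? = some c' →
    c.2.1 = c'.2.1 ∧ c.2.2 = c'.2.2 ∧ c.1 κ = c'.1) ∧
  (∀ (j : ℕ) c c', w[j]? = some c → w[j + 1]? = some c' →
    (EnvTr c c' ∧
      ∀ κ d d', (cf κ)[j]? = some d → (cf κ)[j + 1]? = some d' → EnvTr d d') ∨
    (∃ (t : Act L S) (κ₁ : K), PESStep c (t, κ₁) c' ∧
      (∀ d d', (cf κ₁)[j]? = some d → (cf κ₁)[j + 1]? = some d' →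
        ESStep d (t, κ₁) d') ∧
      (∀ κ, κ ≠ κ₁ → ∀ d d', (cf κ)[j]? = some d → (cf κ)[j + 1]? = some d' →
        EnvTr d d')))

/-!
Every rule of the proof system other than the structural ones demands a stable precondition,
so a derivation for a state `s` yields one for every state reached from `s` by rely steps.
Along a computation of `𝒫𝒮` each component `κ` therefore keeps, for the current state,
derivations of what is left of `𝒫𝒮 κ` under its rely `Rs κ`, which contains the steps of all
other components. One-step soundness of the proof system (for programs by induction on the
nesting depth of `await`) then places every step of `κ` in its guarantee `Gs κ ⊆ G`. Without
environment transitions every step of the computation is such a step, and `stable I G`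
carries `Init ⊆ I` along it.
-/

section Derivations

variable {L S K : Type} [DecidableEq K]

theorem RGDeriv.subset_of_prog_term {pre pst : Set S} {R G : Set (S × S)}
    (h : RGDeriv (L := L) (K := K) (.prog .term) pre R G pst) : pre ⊆ pst := by
  generalize hsp : (Spec.prog .term : Spec L S K) = sp at h
  induction h with
  | conseq _ hpre _ _ hpst _ ih => exact hpre.trans ((ih hsp).trans hpst)
  | unPre _ _ ih₁ ih₂ => exact Set.union_subset (ih₁ hsp) (ih₂ hsp)
  | intPost _ _ ih₁ ih₂ => exact Set.subset_inter (ih₁ hsp) (ih₂ hsp)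
  | univPre _ ih => exact fun v hv => ih v hv hsp rfl
  | emptyPre => exact Set.empty_subset _
  | _ => cases hsp

theorem RGDeriv.exists_stable_pre {sp : Spec L S K} {pre pst : Set S} {R G : Set (S × S)}
    (h : RGDeriv sp pre R G pst) (hsp : sp.noPar) {s : S} (hs : s ∈ pre) :
    ∃ pre', s ∈ pre' ∧ stable pre' R ∧ RGDeriv sp pre' R G pst := by
  induction h generalizing s with
  | basic h₁ h₂ hst h₄ => exact ⟨_, hs, hst, .basic h₁ h₂ hst h₄⟩
  | seq _ hQ ih _ =>
    obtain ⟨pre', hs', hst, hP⟩ := ih trivial hs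
    exact ⟨pre', hs', hst, .seq hP hQ⟩
  | cond h₁ h₂ hst h₄ => exact ⟨_, hs, hst, .cond h₁ h₂ hst h₄⟩
  | whileR h₁ h₂ hst h₄ h₅ => exact ⟨_, hs, hst, .whileR h₁ h₂ hst h₄ h₅⟩
  | awaitR h₁ hst h₃ => exact ⟨_, hs, hst, .awaitR h₁ hst h₃⟩
  | nondt h₁ h₂ hst h₄ => exact ⟨_, hs, hst, .nondt h₁ h₂ hst h₄⟩
  | conseq hnp hpre hR hG hpst _ ih =>
    obtain ⟨pre', hs', hst, h'⟩ := ih hnp (hpre hs)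
    exact ⟨pre', hs', fun x y hx hxy => hst x y hx (hR hxy), .conseq hnp le_rfl hR hG hpst h'⟩
  | unPre _ _ ih₁ ih₂ => exact hs.elim (ih₁ trivial) (ih₂ trivial)
  | intPost _ _ ih₁ ih₂ =>
    obtain ⟨p₁, hs₁, hst₁, h₁⟩ := ih₁ trivial hs
    obtain ⟨p₂, hs₂, hst₂, h₂⟩ := ih₂ trivial hs
    refine ⟨p₁ ∩ p₂, ⟨hs₁, hs₂⟩, fun x y hx hxy => ⟨hst₁ x y hx.1 hxy, hst₂ x y hx.2 hxy⟩, ?_⟩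
    exact .intPost (.conseq trivial Set.inter_subset_left le_rfl le_rfl le_rfl h₁)
      (.conseq trivial Set.inter_subset_right le_rfl le_rfl le_rfl h₂)
  | univPre _ ih => exact ih s hs trivial rfl
  | emptyPre => exact hs.elim
  | inner _ ih =>
    obtain ⟨pre', hs', hst, h'⟩ := ih trivial hs
    exact ⟨pre', hs', hst, .inner h'⟩
  | basicEvt h₁ hst h₃ => exact ⟨_, hs, hst, .basicEvt h₁ hst h₃⟩
  | evtSeq _ hS ih _ =>
    obtain ⟨pre', hs', hst, hE⟩ := ih trivial hs
    exact ⟨pre', hs', hst, .evtSeq hE hS⟩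
  | evtSet h₁ h₂ h₃ h₄ h₅ h₆ hst h₈ => exact ⟨_, hs, hst, .evtSet h₁ h₂ h₃ h₄ h₅ h₆ hst h₈⟩
  | par => exact hsp.elim

theorem RGDeriv.singleton_of_mem {sp : Spec L S K} {pre pst : Set S} {R G : Set (S × S)}
    (h : RGDeriv sp pre R G pst) (hsp : sp.noPar) {s : S} (hs : s ∈ pre) :
    RGDeriv sp {s} R G pst :=
  .conseq hsp (Set.singleton_subset_iff.2 hs) le_rfl le_rfl le_rfl h

theorem RGDeriv.of_rely {sp : Spec L S K} {pst : Set S} {R G : Set (S × S)} {s s' : S}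
    (h : RGDeriv sp {s} R G pst) (hsp : sp.noPar) (hR : (s, s') ∈ R) :
    RGDeriv sp {s'} R G pst := by
  obtain ⟨pre, hs, hst, h⟩ := h.exists_stable_pre hsp rfl
  exact h.singleton_of_mem hsp (hst s s' hs hR)

theorem RGDeriv.weaken {sp : Spec L S K} {pre pst : Set S} {R R' G G' : Set (S × S)}
    (h : RGDeriv sp pre R' G' pst) (hsp : sp.noPar) (hR : R ⊆ R') (hG : G' ⊆ G) :
    RGDeriv sp pre R G pst :=
  .conseq hsp le_rfl hR hG le_rfl h

end Derivations

section Programs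

variable {L S K : Type} [DecidableEq K]

def Prog.awaitDepth : Prog S → ℕ
  | .term | .basic _ | .nondt _ => 0
  | .seq P Q | .cond _ P Q => max P.awaitDepth Q.awaitDepth
  | .while' _ P => P.awaitDepth
  | .await _ P => P.awaitDepth + 1

theorem PStep.awaitDepth_le {P P' : Prog S} {s s' : S} (h : PStep (P, s) (P', s')) :
    P'.awaitDepth ≤ P.awaitDepth := by
  induction P generalizing P' s s' with
  | seq P Q ih =>
    cases h with
    | seq1 _ _ => exact le_max_right _ _
    | seq2 _ h _ => exact max_le_max (ih h) le_rfl
  | _ => cases h <;> simp [Prog.awaitDepth]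

variable (L K) in
def ProgCont (P : Prog S) (R G : Set (S × S)) (pst : Set S) (s : S) : Prop :=
  (P = .term → s ∈ pst) ∧ (P ≠ .term → RGDeriv (L := L) (K := K) (.prog P) {s} R G pst)

theorem ProgCont.term {R G : Set (S × S)} {pst : Set S} {s : S} (hs : s ∈ pst) :
    ProgCont L K .term R G pst s :=
  ⟨fun _ => hs, fun h => absurd rfl h⟩

theorem ProgCont.of_deriv {P : Prog S} {pre pst : Set S} {R G : Set (S × S)} {s : S}
    (h : RGDeriv (L := L) (K := K) (.prog P) pre R G pst) (hs : s ∈ pre) :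
    ProgCont L K P R G pst s := by
  refine ⟨?_, fun _ => h.singleton_of_mem trivial hs⟩
  rintro rfl
  exact h.subset_of_prog_term hs

theorem ProgCont.mono {P : Prog S} {pst pst' : Set S} {R R' G G' : Set (S × S)} {s : S}
    (h : ProgCont L K P R' G' pst' s) (hR : R ⊆ R') (hG : G' ⊆ G) (hpst : pst' ⊆ pst) :
    ProgCont L K P R G pst s :=
  ⟨fun hP => hpst (h.1 hP), fun hP => .conseq trivial le_rfl hR hG hpst (h.2 hP)⟩

theorem ProgCont.inter {P : Prog S} {pst pst' : Set S} {R G : Set (S × S)} {s : S}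
    (h : ProgCont L K P R G pst s) (h' : ProgCont L K P R G pst' s) :
    ProgCont L K P R G (pst ∩ pst') s :=
  ⟨fun hP => ⟨h.1 hP, h'.1 hP⟩, fun hP => .intPost (h.2 hP) (h'.2 hP)⟩

variable (L S K) in
def ProgStepSound (n : ℕ) : Prop :=
  ∀ ⦃P P' : Prog S⦄ ⦃s s' : S⦄ ⦃pre pst : Set S⦄ ⦃R G : Set (S × S)⦄, P.awaitDepth ≤ n →
    RGDeriv (L := L) (K := K) (.prog P) pre R G pst → s ∈ pre → PStep (P, s) (P', s') →
    (s, s') ∈ G ∧ ProgCont L K P' R G pst s'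

theorem ProgStepSound.star {n : ℕ} (hn : ProgStepSound L S K n) {c c' : Prog S × S}
    {pst : Set S} {R G : Set (S × S)} (hc : ProgCont L K c.1 R G pst c.2)
    (hdepth : c.1.awaitDepth ≤ n) (h : PStepStar c c') (hc' : c'.1 = .term) : c'.2 ∈ pst :=
  match c, h with
  | _, .refl _ => hc.1 hc'
  | (P, _), .step h₁ h₂ =>
    have hP : P ≠ .term := by rintro rfl; cases h₁
    hn.star (hn hdepth (hc.2 hP) rfl h₁).2 ((PStep.awaitDepth_le h₁).trans hdepth) h₂ hc'

theorem progStepSound_of_lt {n : ℕ} (ih : ∀ m < n, ProgStepSound L S K m) :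
    ProgStepSound L S K n := by
  intro P P' s s' pre pst R G hdepth hD
  generalize hsp : (Spec.prog P : Spec L S K) = sp at hD
  induction hD generalizing P P' s s' with
  | basic hpst hG _ _ =>
    intro hs h
    cases hsp; cases h
    exact ⟨hG ⟨hs, rfl⟩, .term (hpst hs)⟩
  | seq _ hQ ihP _ =>
    intro hs h
    cases hsp
    have hdepth₁ := (le_max_left _ _).trans hdepth
    cases h with
    | seq1 _ h =>
      obtain ⟨hG, hc⟩ := ihP hdepth₁ rfl hs h
      exact ⟨hG, .of_deriv hQ (hc.1 rfl)⟩
    | seq2 _ h hne =>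
      obtain ⟨hG, hc⟩ := ihP hdepth₁ rfl hs h
      exact ⟨hG, .of_deriv (.seq (hc.2 hne) hQ) rfl⟩
  | cond hP₁ hP₂ _ hid =>
    intro hs h
    cases hsp
    cases h with
    | condT _ _ hb => exact ⟨hid rfl, .of_deriv hP₁ ⟨hs, hb⟩⟩
    | condF _ _ hb => exact ⟨hid rfl, .of_deriv hP₂ ⟨hs, hb⟩⟩
  | whileR hP hsub hst₁ hst₂ hid =>
    intro hs h
    cases hsp
    cases h with
    | whileT _ hb => exact ⟨hid rfl, .of_deriv (.seq hP (.whileR hP hsub hst₁ hst₂ hid)) ⟨hs, hb⟩⟩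
    | whileF _ hb => exact ⟨hid rfl, .term (hsub ⟨hs, hb⟩)⟩
  | @awaitR b B _ _ _ _ hV =>
    intro hs h
    cases hsp
    cases h with
    | await hb hstar =>
      have hlt : B.awaitDepth < n := hdepth
      have hpost :=
        (ih _ hlt).star (c := (B, s)) (.of_deriv (hV s) ⟨⟨hs, hb⟩, rfl⟩) le_rfl hstar rfl
      exact ⟨hpost.1, .term hpost.2⟩
  | nondt hpst hG _ _ =>
    intro hs h
    cases hsp
    cases h with
    | nondt hr => exact ⟨hG ⟨hs, hr⟩, .term ((hpst hs).1 _ hr)⟩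
  | conseq _ hpre hR hG hpst _ ih =>
    intro hs h
    obtain ⟨hG', hc⟩ := ih hdepth hsp (hpre hs) h
    exact ⟨hG hG', hc.mono hR hG hpst⟩
  | unPre _ _ ih₁ ih₂ =>
    intro hs h
    exact hs.elim (ih₁ hdepth hsp · h) (ih₂ hdepth hsp · h)
  | intPost _ _ ih₁ ih₂ =>
    intro hs h
    obtain ⟨hG, hc₁⟩ := ih₁ hdepth hsp hs h
    exact ⟨hG, hc₁.inter (ih₂ hdepth hsp hs h).2⟩
  | univPre _ ih => exact fun hs h => ih s hs hdepth hsp rfl h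
  | emptyPre => exact fun hs => hs.elim
  | _ => cases hsp

theorem progStepSound (n : ℕ) : ProgStepSound L S K n :=
  Nat.strong_induction_on n fun _ ih => progStepSound_of_lt ih

theorem RGDeriv.prog_step {P P' : Prog S} {s s' : S} {pre pst : Set S} {R G : Set (S × S)}
    (hD : RGDeriv (L := L) (K := K) (.prog P) pre R G pst) (hs : s ∈ pre)
    (h : PStep (P, s) (P', s')) : (s, s') ∈ G ∧ ProgCont L K P' R G pst s' :=
  progStepSound _ le_rfl hD hs h

end Programs

section Events

variable {L S K : Type} [DecidableEq K]

variable (K) in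
def EvtCont (e : Event L S) (R G : Set (S × S)) (pst : Set S) (s : S) : Prop :=
  (e = .anony .term → s ∈ pst) ∧ (e ≠ .anony .term → RGDeriv (K := K) (.evt e) {s} R G pst)

theorem ProgCont.anony {P : Prog S} {R G : Set (S × S)} {pst : Set S} {s : S}
    (h : ProgCont L K P R G pst s) : EvtCont K (.anony P : Event L S) R G pst s :=
  ⟨fun he => h.1 (Event.anony.inj he), fun he => .inner (h.2 fun hP => he (hP ▸ rfl))⟩

theorem EStep.ne_anony_term {e : Event L S} {s : S} {x : EvtCtx L S K} {l : Lbl L S K}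
    {c : EConf L S K} (h : EStep (e, s, x) l c) : e ≠ .anony .term := by
  rintro rfl
  cases h with
  | anony _ _ h => cases h

theorem RGDeriv.evt_step {e e' : Event L S} {s s' : S} {x x' : EvtCtx L S K} {l : Lbl L S K}
    {pre pst : Set S} {R G : Set (S × S)} (hD : RGDeriv (K := K) (.evt e) pre R G pst)
    (hs : s ∈ pre) (h : EStep (e, s, x) l (e', s', x')) :
    (s, s') ∈ G ∧ EvtCont K e' R G pst s' := by
  generalize hsp : (Spec.evt e : Spec L S K) = sp at hD
  induction hD generalizing e with
  | inner hP =>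
    cases hsp
    cases h with
    | anony _ _ h =>
      obtain ⟨hG, hc⟩ := hP.prog_step hs h
      exact ⟨hG, hc.anony⟩
  | basicEvt hbody _ hid =>
    cases hsp
    cases h with
    | basic _ _ _ hg => exact ⟨hid rfl, (ProgCont.of_deriv hbody ⟨hs, hg⟩).anony⟩
  | conseq _ hpre hR hG hpst _ ih =>
    obtain ⟨hG', hc⟩ := ih (hpre hs) h hsp
    exact ⟨hG hG', fun he => hpst (hc.1 he), fun he => .conseq trivial le_rfl hR hG hpst (hc.2 he)⟩
  | _ => cases hsp

end Events

section EventSystems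

variable {L S K : Type} [DecidableEq K]

/-- `es`, run from state `σ`, is backed by derivations under rely `R` and guarantee `G`.
A triggered event with body `⊥` leaves `seq (anony term) 𝒮`, which has no transitions;
hence the hypothesis `e ≠ .anony .term` of `seq`. -/
inductive ESSat (K : Type) [DecidableEq K] {L S : Type} (R G : Set (S × S)) :
    EvtSys L S → S → Prop where
  | set {n : ℕ} {es : Fin (n + 1) → Event L S} {psts : Fin (n + 1) → Set S} {σ : S} :
      (∀ i, RGDeriv (K := K) (.evt (es i)) {σ} R G (psts i)) →
      (∀ i j, ∀ σ' ∈ psts i, RGDeriv (K := K) (.evt (es j)) {σ'} R G (psts j)) →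
      ESSat K R G (.set n es) σ
  | seq {e : Event L S} {𝒮 : EvtSys L S} {m : Set S} {σ : S} :
      (e ≠ .anony .term → RGDeriv (K := K) (.evt e) {σ} R G m) →
      (∀ σ' ∈ m, ESSat K R G 𝒮 σ') →
      ESSat K R G (.seq e 𝒮) σ

theorem ESSat.of_rely {R G : Set (S × S)} {es : EvtSys L S} {σ σ' : S}
    (h : ESSat K R G es σ) (hR : (σ, σ') ∈ R) : ESSat K R G es σ' := by
  cases h with
  | set hes hpsts => exact .set (fun i => (hes i).of_rely trivial hR) hpsts
  | seq he h𝒮 => exact .seq (fun hne => (he hne).of_rely trivial hR) h𝒮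

theorem ESSat.mono {R R' G G' : Set (S × S)} {es : EvtSys L S} {σ : S}
    (h : ESSat K R' G' es σ) (hR : R ⊆ R') (hG : G' ⊆ G) : ESSat K R G es σ := by
  induction h with
  | set hes hpsts =>
    exact .set (fun i => (hes i).weaken trivial hR hG)
      fun i j σ' hσ' => (hpsts i j σ' hσ').weaken trivial hR hG
  | seq he _ ih => exact .seq (fun hne => (he hne).weaken trivial hR hG) ih

theorem RGDeriv.esSat {es : EvtSys L S} {pre pst : Set S} {R G : Set (S × S)} {σ : S}
    (h : RGDeriv (K := K) (.esys es) pre R G pst) (hσ : σ ∈ pre) : ESSat K R G es σ := by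
  generalize hsp : (Spec.esys es : Spec L S K) = sp at h
  induction h generalizing es σ with
  | evtSeq hE _ _ ih𝒮 =>
    cases hsp
    exact .seq (fun _ => hE.singleton_of_mem trivial hσ) fun σ' hσ' => ih𝒮 hσ' rfl
  | evtSet hes hpsts hpre _ hR hG =>
    cases hsp
    have hes' i := (hes i).weaken trivial (hR i) (hG i)
    exact .set (fun i => (hes' i).singleton_of_mem trivial (hpre i hσ))
      fun i j σ' hσ' => (hes' j).singleton_of_mem trivial (hpsts i j hσ')
  | conseq _ hpre hR hG _ _ ih => exact (ih (hpre hσ) hsp).mono hR hG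
  | _ => cases hsp

theorem ESSat.step {R G : Set (S × S)} {es es' : EvtSys L S} {σ σ' : S}
    {x x' : EvtCtx L S K} {l : Lbl L S K} (h : ESSat K R G es σ)
    (hstep : ESStep (es, σ, x) l (es', σ', x')) : (σ, σ') ∈ G ∧ ESSat K R G es' σ' := by
  cases h with
  | set hes hpsts =>
    cases hstep with
    | set i he =>
      obtain ⟨hG, hc⟩ := (hes i).evt_step rfl he
      exact ⟨hG, .seq hc.2 fun σ'' hσ'' => .set (hpsts i · σ'' hσ'') hpsts⟩
  | seq he h𝒮 =>
    cases hstep with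
    | seq1 _ hstep _ =>
      obtain ⟨hG, hc⟩ := (he hstep.ne_anony_term).evt_step rfl hstep
      exact ⟨hG, .seq hc.2 h𝒮⟩
    | seq2 _ hstep =>
      obtain ⟨hG, hc⟩ := (he hstep.ne_anony_term).evt_step rfl hstep
      exact ⟨hG, h𝒮 _ (hc.1 rfl)⟩

theorem ESSat.pesStep {Rs Gs : K → Set (S × S)} {ps ps' : PES L S K} {σ σ' : S}
    {x x' : EvtCtx L S K} {l : Lbl L S K} (hGR : ∀ κ κ', κ ≠ κ' → Gs κ ⊆ Rs κ')
    (h : ∀ κ, ESSat K (Rs κ) (Gs κ) (ps κ) σ) (hstep : PESStep (ps, σ, x) l (ps', σ', x')) :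
    (∃ κ, (σ, σ') ∈ Gs κ) ∧ ∀ κ, ESSat K (Rs κ) (Gs κ) (ps' κ) σ' := by
  cases hstep with
  | @par _ κ _ _ _ _ _ _ hes =>
    obtain ⟨hG, hκ⟩ := (h κ).step hes
    refine ⟨⟨κ, hG⟩, fun κ' => ?_⟩
    rcases eq_or_ne κ' κ with rfl | hne
    · simpa using hκ
    · rw [Function.update_of_ne hne]
      exact (h κ').of_rely (hGR κ κ' hne.symm hG)

end EventSystems

theorem Comp.forall_mem_of_no_env {Sp S X : Type} {step : Sp × S × X → Sp × S × X → Prop}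
    {P : Sp × S × X → Prop} {w : List (Sp × S × X)} (hw : Comp step w)
    (hstep : ∀ c c', P c → step c c' → P c') (hhead : ∀ c, w.head? = some c → P c)
    (hnoenv : ∀ (i : ℕ) c c', w[i]? = some c → w[i + 1]? = some c' → ¬ EnvTr c c') :
    ∀ c ∈ w, P c := by
  induction hw with
  | one c => simpa using hhead c rfl
  | @env sp s₁ s₂ x₁ x₂ _ _ _ => exact absurd rfl (hnoenv 0 (sp, s₂, x₂) (sp, s₁, x₁) rfl rfl)
  | @act c c' cs hcc' _ ih =>
    have hc := hhead c rfl
    have hc' := hstep c c' hc hcc'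
    have hrest := ih (fun d hd => by cases hd; exact hc')
      fun i d d' hd hd' => hnoenv (i + 1) d d' hd hd'
    simpa [hc] using hrest

/-- **Invariant verification**: if `⊢ 𝒫𝒮 sat ⟨Init, ∅, G, UNIV⟩`, `Init ⊆ I`
and `stable I G`, then `I` is an invariant of `𝒫𝒮` w.r.t. `Init`: every state
of every environment-transition-free computation of `𝒫𝒮` starting in `Init`
lies in `I`. -/
theorem invariant_verification {L S K : Type} [DecidableEq K]
    (PS : PES L S K) (Init I : Set S) (G : Set (S × S))
    (h1 : RGDeriv (Spec.pes PS) Init (∅ : Set (S × S)) G (Set.univ : Set S))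
    (h2 : Init ⊆ I) (h3 : stable I G) :
    ∀ s ∈ Init, ∀ (x : EvtCtx L S K), ∀ ϖ ∈ cpts pesstepAny PS s x,
      (∀ (i : ℕ) c c', ϖ[i]? = some c → ϖ[i + 1]? = some c' → ¬ EnvTr c c') →
      ∀ (i : ℕ) c, ϖ[i]? = some c → c.2.1 ∈ I := by
  cases h1 with
  | conseq hnp => exact hnp.elim
  | @par _ _ _ _ _ _ _ Rs Gs hder hpre _ hG _ hGR =>
    rintro s hs x ϖ ⟨hϖ, hhead⟩ hnoenv i c hc
    refine (hϖ.forall_mem_of_no_env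
      (P := fun c : PConf L S K => c.2.1 ∈ I ∧ ∀ κ, ESSat K (Rs κ) (Gs κ) (c.1 κ) c.2.1)
      ?_ ?_ hnoenv c (List.mem_of_getElem? hc)).1
    · rintro ⟨ps, σ, x⟩ ⟨ps', σ', x'⟩ ⟨hI, hsat⟩ ⟨l, hstep⟩
      obtain ⟨⟨κ, hGκ⟩, hsat'⟩ := ESSat.pesStep hGR hsat hstep
      exact ⟨h3 σ σ' hI (hG κ hGκ), hsat'⟩
    · intro c hc
      cases hhead.symm.trans hc
      exact ⟨h2 hs, fun κ => (hder κ).esSat (hpre κ hs)⟩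

end PiCore
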